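/- arXiv:2603.03141 — 2 statements merged into one kernel-verified Lean document; each statement's English description precedes it below -/
import Mathlib

section
/- Let σ be a well-formed trace, let e ∈ E_σ, and let σ' be a sync-preserving correct reordering of σ in which e is enabled. Then SPClosureσ({prevσ(e)} \ {⊥}) ⊆ E_σ'. -/
/-!
Events, traces, and predictive data races.

An event datum is a pair of a thread identifier and an operation
(read/write of a memory location, or acquire/release of a lock).
Following the convention that events of a trace are identified with
positions (hence pairwise distinct), a trace is modeled as a
duplicate-free list of event *identifiers* (natural numbers), listed
in trace order, together with a global data assignment
`ev : ℕ → EventData` giving the thread and operation of each event.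
-/

inductive Op : Type
  | read : ℕ → Op
  | write : ℕ → Op
  | acq : ℕ → Op
  | rel : ℕ → Op
  deriving DecidableEq

structure EventData : Type where
  thread : ℕ
  op : Op
  deriving DecidableEq

abbrev Trace : Type := List ℕ

namespace Race

variable (ev : ℕ → EventData)

/-- Trace order: `e1` occurs no later than `e2` in `σ`. -/
def trord (σ : Trace) (e1 e2 : ℕ) : Prop :=
  e1 ∈ σ ∧ e2 ∈ σ ∧ σ.idxOf e1 ≤ σ.idxOf e2

/-- Thread order: trace order plus equality of threads. -/
def threadOrd (σ : Trace) (e1 e2 : ℕ) : Prop :=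
  trord σ e1 e2 ∧ (ev e1).thread = (ev e2).thread

/-- Lock-semantics check: `h` records, for each lock, the thread currently
holding it.  A lock may be acquired only when free, and released only by
the thread holding it. -/
def lockOk : (ℕ → Option ℕ) → Trace → Prop
  | _, [] => True
  | h, e :: rest =>
    match (ev e).op with
    | Op.acq l => h l = none ∧ lockOk (Function.update h l (some (ev e).thread)) rest
    | Op.rel l => h l = some (ev e).thread ∧ lockOk (Function.update h l none) rest
    | _ => lockOk h rest

/-- A well-formed trace: pairwise distinct events respecting lock semantics. -/
def WellFormed (σ : Trace) : Prop := σ.Nodup ∧ lockOk ev (fun _ => none) σ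

/-- A well-formed subtrace: a contiguous subtrace of some well-formed trace. -/
def WellFormedSub (σ : Trace) : Prop :=
  ∃ pre suf : Trace, WellFormed ev (pre ++ σ ++ suf)

/-- Happens-before: the smallest partial order on the events of `σ` containing
thread order and ordering each release before every later acquire of the
same lock. -/
inductive HB (σ : Trace) : ℕ → ℕ → Prop
  | thread_order {e1 e2 : ℕ} : threadOrd ev σ e1 e2 → HB σ e1 e2
  | rel_acq {e1 e2 l : ℕ} :
      trord σ e1 e2 → (ev e1).op = Op.rel l → (ev e2).op = Op.acq l → HB σ e1 e2
  | trans {e1 e2 e3 : ℕ} : HB σ e1 e2 → HB σ e2 e3 → HB σ e1 e3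

def isWrite (o : Op) : Prop := ∃ x, o = Op.write x

/-- The memory location accessed by an operation, if any. -/
def loc : Op → Option ℕ
  | Op.read x => some x
  | Op.write x => some x
  | _ => none

/-- Conflicting events: same location, different threads, at least one write. -/
def Conflicting (e1 e2 : ℕ) : Prop :=
  (ev e1).thread ≠ (ev e2).thread ∧
  (∃ x, loc (ev e1).op = some x ∧ loc (ev e2).op = some x) ∧
  (isWrite (ev e1).op ∨ isWrite (ev e2).op)

/-- An HB race: a conflicting pair of events of `σ`, unordered by happens-before. -/
def HBRace (σ : Trace) (e1 e2 : ℕ) : Prop :=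
  e1 ∈ σ ∧ e2 ∈ σ ∧ Conflicting ev e1 e2 ∧ ¬ HB ev σ e1 e2 ∧ ¬ HB ev σ e2 e1

/-- `lw σ e`: the last write (to the location read by `e`) before `e` in `σ`. -/
def lw (σ : Trace) (e : ℕ) : Option ℕ :=
  match (ev e).op with
  | Op.read x =>
      ((σ.take (σ.idxOf e)).filter fun f => decide ((ev f).op = Op.write x)).getLast?
  | _ => none

/-- The matching release of an acquire: the first release of the same lock after it. -/
def matchRel (σ : Trace) (a : ℕ) : Option ℕ :=
  match (ev a).op with
  | Op.acq l =>
      ((σ.drop (σ.idxOf a + 1)).filter fun f => decide ((ev f).op = Op.rel l)).head?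
  | _ => none

/-- The matching acquire of a release: the last acquire of the same lock before it. -/
def matchAcq (σ : Trace) (r : ℕ) : Option ℕ :=
  match (ev r).op with
  | Op.rel l =>
      ((σ.take (σ.idxOf r)).filter fun f => decide ((ev f).op = Op.acq l)).getLast?
  | _ => none

/-- The last event of the same thread before `e` in `σ`. -/
def prevE (σ : Trace) (e : ℕ) : Option ℕ :=
  ((σ.take (σ.idxOf e)).filter fun f => decide ((ev f).thread = (ev e).thread)).getLast?

/-- `ρ` is a correct reordering of `σ`. -/
structure CorrectReordering (σ ρ : Trace) : Prop where
  wf : WellFormed ev ρ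
  subset : ∀ e ∈ ρ, e ∈ σ
  to_closed : ∀ e1 e2 : ℕ, threadOrd ev σ e1 e2 → e2 ∈ ρ → e1 ∈ ρ ∧ threadOrd ev ρ e1 e2
  lw_eq : ∀ e ∈ ρ, (∃ x, (ev e).op = Op.read x) → lw ev ρ e = lw ev σ e

/-- `e` is enabled in the correct reordering `ρ` of `σ`. -/
def Enabled (σ ρ : Trace) (e : ℕ) : Prop :=
  e ∈ σ ∧ e ∉ ρ ∧ ∀ f : ℕ, threadOrd ev σ f e → f ≠ e → f ∈ ρ

/-- A reordering is sync-preserving if acquires of a common lock keep their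
relative order from `σ`. -/
def SyncPres (σ ρ : Trace) : Prop :=
  ∀ a1 a2 l : ℕ, a1 ∈ ρ → a2 ∈ ρ → (ev a1).op = Op.acq l → (ev a2).op = Op.acq l →
    (trord ρ a1 a2 ↔ trord σ a1 a2)

/-- A sync-preserving race. -/
def SyncPresRace (σ : Trace) (e1 e2 : ℕ) : Prop :=
  e1 ∈ σ ∧ e2 ∈ σ ∧ Conflicting ev e1 e2 ∧
  ∃ ρ : Trace, CorrectReordering ev σ ρ ∧ SyncPres ev σ ρ ∧
    Enabled ev σ ρ e1 ∧ Enabled ev σ ρ e2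

/-- A predictive race. -/
def PredictiveRace (σ : Trace) (e1 e2 : ℕ) : Prop :=
  e1 ∈ σ ∧ e2 ∈ σ ∧ Conflicting ev e1 e2 ∧
  ∃ ρ : Trace, CorrectReordering ev σ ρ ∧ Enabled ev σ ρ e1 ∧ Enabled ev σ ρ e2

/-- A subset of the events of `σ`, downward closed under thread order and
closed under last-writes. -/
def TLClosed (σ : Trace) (S : Set ℕ) : Prop :=
  (∀ e ∈ S, e ∈ σ) ∧
  (∀ e1 e2 : ℕ, threadOrd ev σ e1 e2 → e2 ∈ S → e1 ∈ S) ∧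
  (∀ e ∈ S, ∀ f : ℕ, lw ev σ e = some f → f ∈ S)

/-- The smallest TL-closed set containing `S`. -/
def TLClosure (σ : Trace) (S : Set ℕ) : Set ℕ :=
  ⋂₀ {C : Set ℕ | TLClosed ev σ C ∧ S ⊆ C}

/-- Sync-preserving closed sets. -/
def SPClosed (σ : Trace) (S : Set ℕ) : Prop :=
  TLClosed ev σ S ∧
  ∀ a1 a2 l : ℕ, a1 ∈ S → a2 ∈ S → (ev a1).op = Op.acq l → (ev a2).op = Op.acq l →
    trord σ a1 a2 → a1 ≠ a2 → ∀ r : ℕ, matchRel ev σ a1 = some r → r ∈ S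

/-- The smallest sync-preserving closed set containing `S`. -/
def SPClosure (σ : Trace) (S : Set ℕ) : Set ℕ :=
  ⋂₀ {C : Set ℕ | SPClosed ev σ C ∧ S ⊆ C}

/-- `SPIdeal σ e1 e2 = SPClosure σ ({prev σ e1, prev σ e2} \ {⊥})`. -/
def SPIdeal (σ : Trace) (e1 e2 : ℕ) : Set ℕ :=
  SPClosure ev σ {f : ℕ | prevE ev σ e1 = some f ∨ prevE ev σ e2 = some f}

/-- Local time: the number of events strictly below `e` in thread order. -/
def ltime (σ : Trace) (e : ℕ) : ℕ :=
  ((σ.take (σ.idxOf e)).filter fun f => decide ((ev f).thread = (ev e).thread)).length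

/-- Causal timestamp: for each thread `t`, the maximum local time of an
event of thread `t` happening before `e` (and `-1` if there is none). -/
noncomputable def ctime (σ : Trace) (e : ℕ) (t : ℕ) : ℤ :=
  sSup (insert (-1)
    {n : ℤ | ∃ f ∈ σ, (ev f).thread = t ∧ HB ev σ f e ∧ n = (ltime ev σ f : ℤ)})

end Race

/-!
The events of `ρ` form a sync-preserving closed set containing `prev σ e`, so they contain
the closure. Thread-order and last-write closure are built into correct reorderings; the
lock condition is the real point. If `a₁` precedes `a₂` in `σ`, both acquiring `ℓ` and both in
`ρ`, sync-preservation keeps `a₁` before `a₂` in `ρ`, so lock semantics in `ρ` forces a release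
`r'` of `ℓ` by the thread of `a₁` after `a₁` in `ρ`. Thread order is preserved, so `r'` also
follows `a₁` in `σ`, hence lies no earlier than `match σ a₁`; the latter is by the same thread
(lock semantics in `σ`), so it belongs to `ρ` by thread-order closure.
-/

namespace List

variable {α : Type*} [DecidableEq α]

theorem mem_drop_of_le_idxOf {l : List α} {n : ℕ} {x : α} (hx : x ∈ l) (hn : n ≤ l.idxOf x) :
    x ∈ l.drop n := by
  rcases mem_append.mp ((take_append_drop n l).symm ▸ hx) with h | h
  · exact absurd ((mem_take_iff_idxOf_lt hx).mp h) (not_lt.mpr hn)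
  · exact h

theorem Nodup.le_idxOf_of_mem_drop {l : List α} (hl : l.Nodup) {n : ℕ} {x : α}
    (hx : x ∈ l.drop n) : n ≤ l.idxOf x := by
  by_contra! h
  rw [← take_append_drop n l] at hl
  exact disjoint_of_nodup_append hl ((mem_take_iff_idxOf_lt (mem_of_mem_drop hx)).mpr h) hx

theorem Nodup.idxOf_le_of_head?_filter_drop {l : List α} (hl : l.Nodup) {n : ℕ}
    {p : α → Bool} {r x : α} (hr : ((l.drop n).filter p).head? = some r) (hx : x ∈ l.drop n)
    (hp : p x) : l.idxOf r ≤ l.idxOf x := by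
  rw [head?_filter, find?_eq_some_iff_append] at hr
  obtain ⟨hpr, as, bs, hdrop, has⟩ := hr
  rw [← take_append_drop n l, hdrop] at hl ⊢
  grind

end List

namespace Race

variable {ev : ℕ → EventData}

section LockSemantics

variable (ev) in
def lockStep (h : ℕ → Option ℕ) (e : ℕ) : ℕ → Option ℕ :=
  match (ev e).op with
  | Op.acq l => Function.update h l (some (ev e).thread)
  | Op.rel l => Function.update h l none
  | _ => h

variable {h : ℕ → Option ℕ} {e l : ℕ} {τ : Trace}

theorem lockOk.tail (hok : lockOk ev h (e :: τ)) : lockOk ev (lockStep ev h e) τ := by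
  unfold lockOk at hok
  unfold lockStep
  split at hok <;> simp_all

theorem lockOk.free_of_acq (hok : lockOk ev h (e :: τ)) (he : (ev e).op = Op.acq l) :
    h l = none := by
  simp only [lockOk, he] at hok
  exact hok.1

theorem lockOk.held_of_rel (hok : lockOk ev h (e :: τ)) (he : (ev e).op = Op.rel l) :
    h l = some (ev e).thread := by
  simp only [lockOk, he] at hok
  exact hok.1

theorem lockStep_of_acq (he : (ev e).op = Op.acq l) :
    lockStep ev h e l = some (ev e).thread := by
  simp [lockStep, he]

theorem lockStep_of_ne (hacq : (ev e).op ≠ Op.acq l) (hrel : (ev e).op ≠ Op.rel l) :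
    lockStep ev h e l = h l := by
  cases hop : (ev e).op <;> simp_all [lockStep, eq_comm]

theorem lockOk.drop (hok : lockOk ev h τ) (n : ℕ) : ∃ h', lockOk ev h' (τ.drop n) := by
  induction τ generalizing h n with
  | nil => exact ⟨h, by simpa using hok⟩
  | cons e τ ih =>
    cases n with
    | zero => exact ⟨h, hok⟩
    | succ n => exact ih hok.tail n

theorem lockOk.thread_of_head?_filter_rel {t r : ℕ} (hok : lockOk ev h τ)
    (hl : h l = some t) (hr : (τ.filter fun f => decide ((ev f).op = Op.rel l)).head? = some r) :
    (ev r).thread = t := by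
  induction τ generalizing h with
  | nil => simp at hr
  | cons e τ ih =>
    by_cases hrel : (ev e).op = Op.rel l
    · rw [List.filter_cons_of_pos (by simpa using hrel), List.head?_cons, Option.some_inj] at hr
      subst hr
      exact Option.some_inj.mp ((hok.held_of_rel hrel).symm.trans hl)
    · have hacq : (ev e).op ≠ Op.acq l := fun hacq => by simp [hok.free_of_acq hacq] at hl
      rw [List.filter_cons_of_neg (by simpa using hrel)] at hr
      exact ih hok.tail ((lockStep_of_ne hacq hrel).trans hl) hr

theorem lockOk.exists_rel_of_acq {t a : ℕ} (hok : lockOk ev h τ) (hl : h l = some t)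
    (ha : a ∈ τ) (hacq : (ev a).op = Op.acq l) : ∃ r ∈ τ, (ev r).op = Op.rel l := by
  induction τ generalizing h with
  | nil => simp at ha
  | cons e τ ih =>
    by_cases hrel : (ev e).op = Op.rel l
    · exact ⟨e, List.mem_cons_self, hrel⟩
    · have hacq' : (ev e).op ≠ Op.acq l := fun hacq' => by simp [hok.free_of_acq hacq'] at hl
      have ha' : a ∈ τ := (List.mem_cons.mp ha).resolve_left (by rintro rfl; exact hacq' hacq)
      obtain ⟨r, hr, hrel⟩ := ih hok.tail ((lockStep_of_ne hacq' hrel).trans hl) ha'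
      exact ⟨r, List.mem_cons_of_mem e hr, hrel⟩

theorem lockOk.held_after_acq {a : ℕ} (hok : lockOk ev h τ) (ha : a ∈ τ)
    (hacq : (ev a).op = Op.acq l) :
    ∃ h', lockOk ev h' (τ.drop (τ.idxOf a + 1)) ∧ h' l = some (ev a).thread := by
  obtain ⟨h', hok'⟩ := hok.drop (τ.idxOf a)
  have hlt : τ.idxOf a < τ.length := List.idxOf_lt_length_of_mem ha
  rw [List.drop_eq_getElem_cons hlt, List.getElem_idxOf hlt] at hok'
  exact ⟨_, hok'.tail, lockStep_of_acq hacq⟩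

end LockSemantics

section MatchingRelease

variable {σ : Trace} {a r : ℕ}

theorem matchRel_eq_some_iff {l : ℕ} (hacq : (ev a).op = Op.acq l) :
    matchRel ev σ a = some r ↔
      ((σ.drop (σ.idxOf a + 1)).filter fun f => decide ((ev f).op = Op.rel l)).head? =
        some r := by
  simp [matchRel, hacq]

theorem exists_acq_of_matchRel_eq_some (hr : matchRel ev σ a = some r) :
    ∃ l, (ev a).op = Op.acq l := by
  unfold matchRel at hr
  split at hr
  · exact ⟨_, ‹_›⟩
  · simp at hr

theorem mem_of_matchRel_eq_some (hr : matchRel ev σ a = some r) : a ∈ σ := by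
  obtain ⟨l, hacq⟩ := exists_acq_of_matchRel_eq_some hr
  by_contra ha
  simp [matchRel_eq_some_iff hacq, List.idxOf_of_notMem ha, List.drop_eq_nil_of_le] at hr

theorem matchRel_spec (hσ : σ.Nodup) {l : ℕ} (hacq : (ev a).op = Op.acq l)
    (hr : matchRel ev σ a = some r) :
    r ∈ σ ∧ σ.idxOf a < σ.idxOf r ∧ (ev r).op = Op.rel l := by
  rw [matchRel_eq_some_iff hacq] at hr
  obtain ⟨hdrop, hrel⟩ := List.mem_filter.mp (List.mem_of_mem_head? hr)
  exact ⟨List.mem_of_mem_drop hdrop, hσ.le_idxOf_of_mem_drop hdrop, by simpa using hrel⟩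

theorem matchRel_le (hσ : σ.Nodup) {l r' : ℕ} (hacq : (ev a).op = Op.acq l)
    (hr : matchRel ev σ a = some r) (hr' : r' ∈ σ) (hrel : (ev r').op = Op.rel l)
    (hlt : σ.idxOf a < σ.idxOf r') : σ.idxOf r ≤ σ.idxOf r' := by
  rw [matchRel_eq_some_iff hacq] at hr
  exact hσ.idxOf_le_of_head?_filter_drop hr (List.mem_drop_of_le_idxOf hr' hlt)
    (by simpa using hrel)

theorem WellFormed.thread_matchRel (hσ : WellFormed ev σ) (hr : matchRel ev σ a = some r) :
    (ev r).thread = (ev a).thread := by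
  obtain ⟨l, hacq⟩ := exists_acq_of_matchRel_eq_some hr
  obtain ⟨h', hok, hl⟩ := hσ.2.held_after_acq (mem_of_matchRel_eq_some hr) hacq
  exact hok.thread_of_head?_filter_rel hl ((matchRel_eq_some_iff hacq).mp hr)

theorem WellFormed.exists_matchRel (hσ : WellFormed ev σ) {a' l : ℕ} (ha : a ∈ σ)
    (ha' : a' ∈ σ) (hacq : (ev a).op = Op.acq l) (hacq' : (ev a').op = Op.acq l)
    (hlt : σ.idxOf a < σ.idxOf a') : ∃ r, matchRel ev σ a = some r := by
  obtain ⟨h', hok, hl⟩ := hσ.2.held_after_acq ha hacq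
  obtain ⟨r', hr', hrel⟩ := hok.exists_rel_of_acq hl (List.mem_drop_of_le_idxOf ha' hlt) hacq'
  simp only [matchRel_eq_some_iff hacq]
  exact Option.ne_none_iff_exists'.mp <| mt List.head?_eq_none_iff.mp <|
    List.ne_nil_of_mem <| List.mem_filter.mpr ⟨hr', by simpa using hrel⟩

end MatchingRelease

theorem lw_spec {σ : Trace} {f g : ℕ} (hg : lw ev σ f = some g) :
    (∃ x, (ev f).op = Op.read x) ∧ g ∈ σ := by
  unfold lw at hg
  split at hg
  · exact ⟨⟨_, ‹_›⟩,
      List.mem_of_mem_take (List.mem_filter.mp (List.mem_of_mem_getLast? hg)).1⟩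
  · simp at hg

theorem prevE_spec {σ : Trace} {e f : ℕ} (hf : prevE ev σ e = some f) :
    f ∈ σ ∧ σ.idxOf f < σ.idxOf e ∧ (ev f).thread = (ev e).thread := by
  obtain ⟨htake, hth⟩ := List.mem_filter.mp (List.mem_of_mem_getLast? hf)
  have hfσ := List.mem_of_mem_take htake
  exact ⟨hfσ, (List.mem_take_iff_idxOf_lt hfσ).mp htake, by simpa using hth⟩

theorem spClosure_subset {σ : Trace} {S C : Set ℕ} (hC : SPClosed ev σ C) (hS : S ⊆ C) :
    SPClosure ev σ S ⊆ C :=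
  Set.sInter_subset_of_mem ⟨hC, hS⟩

namespace CorrectReordering

variable {σ ρ : Trace}

theorem idxOf_lt_of_idxOf_lt (hcr : CorrectReordering ev σ ρ) {a b : ℕ} (ha : a ∈ ρ)
    (hb : b ∈ ρ) (hth : (ev a).thread = (ev b).thread)
    (hlt : ρ.idxOf a < ρ.idxOf b) : σ.idxOf a < σ.idxOf b := by
  by_contra! hle
  have hba := (hcr.to_closed b a ⟨⟨hcr.subset b hb, hcr.subset a ha, hle⟩, hth.symm⟩ ha).2
  exact absurd hba.1.2.2 (not_le.mpr hlt)

theorem tlClosed (hcr : CorrectReordering ev σ ρ) : TLClosed ev σ {f | f ∈ ρ} := by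
  refine ⟨hcr.subset, fun e₁ e₂ hto he₂ => (hcr.to_closed e₁ e₂ hto he₂).1, ?_⟩
  intro f hf g hg
  obtain ⟨hread, -⟩ := lw_spec hg
  exact (lw_spec ((hcr.lw_eq f hf hread).trans hg)).2

theorem spClosed (hcr : CorrectReordering ev σ ρ) (hσ : WellFormed ev σ)
    (hsp : SyncPres ev σ ρ) : SPClosed ev σ {f | f ∈ ρ} := by
  refine ⟨hcr.tlClosed, ?_⟩
  intro a₁ a₂ l (ha₁ : a₁ ∈ ρ) (ha₂ : a₂ ∈ ρ) hacq₁ hacq₂ htr hne r hr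
  have hltρ : ρ.idxOf a₁ < ρ.idxOf a₂ :=
    ((hsp a₁ a₂ l ha₁ ha₂ hacq₁ hacq₂).mpr htr).2.2.lt_of_ne
      (fun h => hne ((List.idxOf_inj ha₁).mp h))
  obtain ⟨r', hr'⟩ := hcr.wf.exists_matchRel ha₁ ha₂ hacq₁ hacq₂ hltρ
  obtain ⟨hr'ρ, hltr', hrel'⟩ := matchRel_spec hcr.wf.1 hacq₁ hr'
  have hthr' := hcr.wf.thread_matchRel hr'
  have hltσ := hcr.idxOf_lt_of_idxOf_lt ha₁ hr'ρ hthr'.symm hltr'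
  have hle := matchRel_le hσ.1 hacq₁ hr (hcr.subset r' hr'ρ) hrel' hltσ
  have hrr' : threadOrd ev σ r r' :=
    ⟨⟨(matchRel_spec hσ.1 hacq₁ hr).1, hcr.subset r' hr'ρ, hle⟩,
      (hσ.thread_matchRel hr).trans hthr'.symm⟩
  exact (hcr.to_closed r r' hrr' hr'ρ).1

end CorrectReordering

theorem Enabled.prevE_mem {σ ρ : Trace} {e f : ℕ} (hen : Enabled ev σ ρ e)
    (hf : prevE ev σ e = some f) : f ∈ ρ := by
  obtain ⟨hfσ, hlt, hth⟩ := prevE_spec hf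
  exact hen.2.2 f ⟨⟨hfσ, hen.1, hlt.le⟩, hth⟩ (by rintro rfl; exact lt_irrefl _ hlt)

end Race

open Race in
theorem spclosure_subset_of_enabled_general (ev : ℕ → EventData) (σ ρ : Trace)
    (hwf : WellFormed ev σ) (e : ℕ)
    (hcr : CorrectReordering ev σ ρ) (hsp : SyncPres ev σ ρ)
    (hen : Enabled ev σ ρ e) :
    SPClosure ev σ {f : ℕ | prevE ev σ e = some f} ⊆ {f : ℕ | f ∈ ρ} :=
  spClosure_subset (hcr.spClosed hwf hsp) fun _ hf => hen.prevE_mem hf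

open Race in
/-- if `e` is enabled in a sync-preserving correct reordering
`ρ` of a well-formed trace `σ`, then `SPClosure σ ({prev σ e} \ {⊥})` is
contained in the events of `ρ`. -/
theorem spclosure_subset_of_enabled (ev : ℕ → EventData) (σ ρ : Trace)
    (hwf : WellFormed ev σ) (e : ℕ) (he : e ∈ σ)
    (hcr : CorrectReordering ev σ ρ) (hsp : SyncPres ev σ ρ)
    (hen : Enabled ev σ ρ e) :
    SPClosure ev σ {f : ℕ | prevE ev σ e = some f} ⊆ {f : ℕ | f ∈ ρ} :=
  spclosure_subset_of_enabled_general ev σ ρ hwf e hcr hsp hen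
end

section
/- Let σ be a well-formed trace and let ρ = σ[i:j] be a contiguous subtrace of σ. If for every release event e in ρ the matching acquire matchσ(e) also lies in ρ, then ρ is itself a well-formed trace. -/
/-
A lock-state `h` maps each lock to the thread holding it. Running `ρ` from the state left by
`pre` is lock-correct because `σ` is. Starting instead from the empty state can only change
the outcome at a lock `l` that is held on entry to `ρ`; but then the first event of `ρ` on `l`
would have to be a release, and the hypothesis places its matching acquire inside `ρ`, earlier.
So no event of `ρ` touches such an `l` before it is acquired, and the two runs agree.
-/

namespace Race

variable (ev : ℕ → EventData)

def step (h : ℕ → Option ℕ) (e : ℕ) : ℕ → Option ℕ :=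
  match (ev e).op with
  | Op.acq l => Function.update h l (some (ev e).thread)
  | Op.rel l => Function.update h l none
  | _ => h

def stepOk (h : ℕ → Option ℕ) (e : ℕ) : Prop :=
  match (ev e).op with
  | Op.acq l => h l = none
  | Op.rel l => h l = some (ev e).thread
  | _ => True

def AcqBeforeRel (l : ℕ) (ρ : Trace) : Prop :=
  ∀ xs r ys, ρ = xs ++ r :: ys → (ev r).op = Op.rel l → ∃ a ∈ xs, (ev a).op = Op.acq l

def Compatible (h h' : ℕ → Option ℕ) (ρ : Trace) : Prop :=
  ∀ l, h' l = h l ∨ h' l = none ∧ AcqBeforeRel ev l ρ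

variable {ev}

theorem lockOk_cons {h : ℕ → Option ℕ} {e : ℕ} {ρ : Trace} :
    lockOk ev h (e :: ρ) ↔ stepOk ev h e ∧ lockOk ev (step ev h e) ρ := by
  cases hop : (ev e).op <;> simp [lockOk, stepOk, step, hop]

theorem lockOk_append {h : ℕ → Option ℕ} {ρ τ : Trace} :
    lockOk ev h (ρ ++ τ) ↔ lockOk ev h ρ ∧ lockOk ev (ρ.foldl (step ev) h) τ := by
  induction ρ generalizing h with
  | nil => simp [lockOk]
  | cons e ρ ih => simp only [List.cons_append, lockOk_cons, ih, List.foldl_cons, and_assoc]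

theorem step_apply_of_ne {h : ℕ → Option ℕ} {e l : ℕ} (hacq : (ev e).op ≠ Op.acq l)
    (hrel : (ev e).op ≠ Op.rel l) : step ev h e l = h l := by
  cases hop : (ev e).op <;> simp_all [step, Function.update_of_ne, Ne.symm]

theorem step_apply_eq (h h' : ℕ → Option ℕ) {e l : ℕ}
    (hop : (ev e).op = Op.acq l ∨ (ev e).op = Op.rel l) : step ev h e l = step ev h' e l := by
  rcases hop with hop | hop <;> simp [step, hop]

namespace AcqBeforeRel

variable {l e : ℕ} {ρ : Trace}

theorem head_ne_rel (hρ : AcqBeforeRel ev l (e :: ρ)) : (ev e).op ≠ Op.rel l := fun hrel => by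
  simpa using hρ [] e ρ rfl hrel

theorem tail (hρ : AcqBeforeRel ev l (e :: ρ)) (he : (ev e).op ≠ Op.acq l) :
    AcqBeforeRel ev l ρ := by
  rintro xs r ys rfl hrel
  obtain ⟨a, ha, hacq⟩ := hρ (e :: xs) r ys rfl hrel
  rcases List.mem_cons.mp ha with rfl | ha
  · exact absurd hacq he
  · exact ⟨a, ha, hacq⟩

end AcqBeforeRel

theorem Compatible.stepOk {h h' : ℕ → Option ℕ} {e : ℕ} {ρ : Trace}
    (hc : Compatible ev h h' (e :: ρ)) (hok : stepOk ev h e) : stepOk ev h' e := by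
  unfold Race.stepOk at hok ⊢
  split at hok
  next l hop =>
    rcases hc l with hl | ⟨hl, -⟩ <;> simp_all
  next l hop =>
    rcases hc l with hl | ⟨-, hρ⟩
    · simp_all
    · exact absurd hop hρ.head_ne_rel
  next => trivial

theorem Compatible.step {h h' : ℕ → Option ℕ} {e : ℕ} {ρ : Trace}
    (hc : Compatible ev h h' (e :: ρ)) :
    Compatible ev (step ev h e) (step ev h' e) ρ := by
  intro l
  by_cases hop : (ev e).op = Op.acq l ∨ (ev e).op = Op.rel l
  · exact Or.inl (step_apply_eq h' h hop)
  · push Not at hop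
    rw [step_apply_of_ne hop.1 hop.2, step_apply_of_ne hop.1 hop.2]
    exact (hc l).imp_right fun ⟨hl, hρ⟩ => ⟨hl, hρ.tail hop.1⟩

theorem lockOk_of_compatible {h h' : ℕ → Option ℕ} {ρ : Trace} (hok : lockOk ev h ρ)
    (hc : Compatible ev h h' ρ) : lockOk ev h' ρ := by
  induction ρ generalizing h h' with
  | nil => trivial
  | cons e ρ ih =>
    rw [lockOk_cons] at hok ⊢
    exact ⟨hc.stepOk hok.1, ih hok.2 hc.step⟩

theorem lockOk_empty_of_acqBeforeRel {h : ℕ → Option ℕ} {ρ : Trace} (hok : lockOk ev h ρ)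
    (hρ : ∀ l, AcqBeforeRel ev l ρ) : lockOk ev (fun _ => none) ρ :=
  lockOk_of_compatible hok fun l => Or.inr ⟨rfl, hρ l⟩

theorem matchAcq_mem_take {σ : Trace} {r a l : ℕ} (hr : (ev r).op = Op.rel l)
    (ha : matchAcq ev σ r = some a) : (ev a).op = Op.acq l ∧ a ∈ σ.take (σ.idxOf r) := by
  rw [matchAcq, hr] at ha
  simpa [and_comm] using List.mem_of_getLast? ha

theorem take_idxOf_append_cons {α : Type*} [BEq α] [LawfulBEq α] {xs ys : List α} {r : α}
    (hr : r ∉ xs) :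
    (xs ++ r :: ys).take ((xs ++ r :: ys).idxOf r) = xs := by
  rw [List.idxOf_append_of_notMem hr, List.idxOf_cons_self, Nat.add_zero, List.take_left' rfl]

theorem acqBeforeRel_of_matchAcq_mem {pre ρ suf : Trace} (hnd : (pre ++ ρ ++ suf).Nodup)
    (hmatch : ∀ e ∈ ρ, ∀ l : ℕ, (ev e).op = Op.rel l →
      ∃ a : ℕ, matchAcq ev (pre ++ ρ ++ suf) e = some a ∧ a ∈ ρ) (l : ℕ) :
    AcqBeforeRel ev l ρ := by
  rintro xs r ys rfl hrel
  obtain ⟨a, hma, haρ⟩ := hmatch r (by simp) l hrel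
  obtain ⟨hacq, hatake⟩ := matchAcq_mem_take hrel hma
  have hσ : pre ++ (xs ++ r :: ys) ++ suf = (pre ++ xs) ++ r :: (ys ++ suf) := by simp
  have hr : r ∉ pre ++ xs := fun hr =>
    List.disjoint_of_nodup_append (hσ ▸ hnd) hr List.mem_cons_self
  rw [hσ, take_idxOf_append_cons hr] at hatake
  have hapre : a ∉ pre := fun hpre =>
    List.disjoint_of_nodup_append (hnd.sublist (List.prefix_append _ _).sublist) hpre haρ
  exact ⟨a, (List.mem_append.mp hatake).resolve_left hapre, hacq⟩

end Race

open Race in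
/-- a contiguous subtrace `ρ` of a well-formed trace `σ` in
which every release event has its matching acquire inside `ρ` is itself a
well-formed trace. -/
theorem subtrace_wellformed (ev : ℕ → EventData) (σ ρ pre suf : Trace)
    (hwf : WellFormed ev σ) (hsub : σ = pre ++ ρ ++ suf)
    (hmatch : ∀ e ∈ ρ, ∀ l : ℕ, (ev e).op = Op.rel l →
      ∃ a : ℕ, matchAcq ev σ e = some a ∧ a ∈ ρ) :
    WellFormed ev ρ := by
  subst hsub
  obtain ⟨hnd, hok⟩ := hwf
  rw [List.append_assoc, lockOk_append, lockOk_append] at hok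
  exact ⟨hnd.sublist (List.infix_append _ _ _).sublist,
    lockOk_empty_of_acqBeforeRel hok.2.1 (acqBeforeRel_of_matchAcq_mem hnd hmatch)⟩
end
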